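/- arXiv:2308.16362 — 6 statements merged into one kernel-verified Lean document; each statement's English description precedes it below -/
import Mathlib

section
/- Let φ = f + r be (ρ+η)-weakly convex with attained minimum φ* on X, and λ < 1/(ρ+η). Suppose there are c₁₁, c₁₂ ≥ 0 with ‖g(x)+h(x)‖² ≤ c₁₁[φ(x) − φ*] + c₁₂ for all x ∈ X, g(x) ∈ ∂f(x), h(x) ∈ ∂r(x). Then ‖g(x)+h(x)‖² ≤ 2c₁₁(1 + c₁₁λ)[φ_λ(x) − φ*] + 2c₁₂ for all x ∈ X. -/
open scoped RealInnerProductSpace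

abbrev E (d : ℕ) := EuclideanSpace ℝ (Fin d)

/-- (B_G) implies (B₃) for φ = f + r with f ρ-weakly convex and
r η-weakly convex. -/
theorem BG_implies_B3 {d : ℕ} (ρ η lam : ℝ) (hρ : 0 ≤ ρ) (hη : 0 ≤ η)
    (hlam : 0 < lam) (hlamρη : lam * (ρ + η) < 1)
    (X : Set (E d)) (hXcl : IsClosed X) (hXcv : Convex ℝ X) (hXne : X.Nonempty)
    (f r : E d → ℝ)
    (hf : ConvexOn ℝ X (fun z => f z + ρ / 2 * ‖z‖ ^ 2))
    (hr : ConvexOn ℝ X (fun z => r z + η / 2 * ‖z‖ ^ 2))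
    (p : E d → E d) (hpX : ∀ x, p x ∈ X)
    (hpmin : ∀ x : E d, ∀ y ∈ X,
      (f (p x) + r (p x)) + ‖p x - x‖ ^ 2 / (2 * lam) ≤ (f y + r y) + ‖y - x‖ ^ 2 / (2 * lam))
    (φl : E d → ℝ)
    (hφl : ∀ x : E d, φl x = (f (p x) + r (p x)) + ‖p x - x‖ ^ 2 / (2 * lam))
    (xstar : E d) (hxstarX : xstar ∈ X)
    (hxstarmin : ∀ y ∈ X, f xstar + r xstar ≤ f y + r y)
    (c₁₁ c₁₂ : ℝ) (hc₁₁ : 0 ≤ c₁₁) (hc₁₂ : 0 ≤ c₁₂)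
    (hBG : ∀ x ∈ X, ∀ g h : E d,
      (∀ y ∈ X, f y ≥ f x + ⟪g, y - x⟫ - ρ / 2 * ‖x - y‖ ^ 2) →
      (∀ y ∈ X, r y ≥ r x + ⟪h, y - x⟫ - η / 2 * ‖x - y‖ ^ 2) →
      ‖g + h‖ ^ 2 ≤ c₁₁ * ((f x + r x) - (f xstar + r xstar)) + c₁₂) :
    ∀ x ∈ X, ∀ g h : E d,
      (∀ y ∈ X, f y ≥ f x + ⟪g, y - x⟫ - ρ / 2 * ‖x - y‖ ^ 2) →
      (∀ y ∈ X, r y ≥ r x + ⟪h, y - x⟫ - η / 2 * ‖x - y‖ ^ 2) →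
      ‖g + h‖ ^ 2 ≤ 2 * c₁₁ * (1 + c₁₁ * lam) * (φl x - (f xstar + r xstar)) + 2 * c₁₂ := by
  intro x hx g h hg hh
  set n := ‖g + h‖ with hn
  set D := ‖p x - x‖ with hD
  have hn0 : 0 ≤ n := norm_nonneg _
  have hD0 : 0 ≤ D := norm_nonneg _
  -- abbreviations
  set φp := f (p x) + r (p x) with hφp
  set φs := f xstar + r xstar with hφs
  -- (B_G) at x
  have hs2 : n ^ 2 ≤ c₁₁ * ((f x + r x) - φs) + c₁₂ := hBG x hx g h hg hh
  -- subgradient inequalities at y = p x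
  have hfpx := hg (p x) (hpX x)
  have hrpx := hh (p x) (hpX x)
  have hnormrev : ‖x - p x‖ = D := by rw [hD, norm_sub_rev]
  have hinner : ⟪g + h, p x - x⟫ = ⟪g, p x - x⟫ + ⟪h, p x - x⟫ := inner_add_left _ _ _
  have habs : |⟪g + h, p x - x⟫| ≤ n * D := abs_real_inner_le_norm _ _
  have habs' : -(n * D) ≤ ⟪g + h, p x - x⟫ := neg_le_of_abs_le habs
  -- sum of subgradient inequalities
  have hsub : φp ≥ f x + r x + ⟪g + h, p x - x⟫ - (ρ + η) / 2 * D ^ 2 := by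
    rw [hnormrev] at hfpx hrpx
    rw [hinner]; linarith
  -- Moreau envelope value
  have hφlx : φl x = φp + D ^ 2 / (2 * lam) := hφl x
  have hmin : φs ≤ φp := hxstarmin _ (hpX x)
  set M := φl x - φs with hM
  have hMD : D ^ 2 / (2 * lam) ≤ M := by rw [hM, hφlx]; linarith
  have hD2M : D ^ 2 ≤ 2 * lam * M := by
    rw [div_le_iff₀ (by positivity)] at hMD; linarith [hMD]
  have hM0 : 0 ≤ M := le_trans (by positivity) hMD
  -- (ρ+η)/2 * D² ≤ D²/(2λ)
  have hrel : (ρ + η) / 2 * D ^ 2 ≤ D ^ 2 / (2 * lam) := by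
    rw [le_div_iff₀ (by positivity)]
    nlinarith [mul_nonneg (by linarith : (0:ℝ) ≤ 1 - lam * (ρ + η)) (sq_nonneg D)]
  -- chain
  have key : n ^ 2 ≤ c₁₁ * (M + n * D) + c₁₂ := by
    have h1 : (f x + r x) - φs ≤ φp - φs + n * D + (ρ + η) / 2 * D ^ 2 := by linarith
    have h2 : (f x + r x) - φs ≤ M + n * D := by
      rw [hM, hφlx]; linarith
    have h3 := mul_le_mul_of_nonneg_left h2 hc₁₁
    linarith only [hs2, h3]
  -- Young's inequality and conclusion
  have young : c₁₁ * (n * D) ≤ n ^ 2 / 2 + c₁₁ ^ 2 * D ^ 2 / 2 := by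
    have hsq := sq_nonneg (n - c₁₁ * D)
    have hexp : (n - c₁₁ * D) ^ 2 = n ^ 2 - 2 * (c₁₁ * (n * D)) + c₁₁ ^ 2 * D ^ 2 := by ring
    linarith only [hsq, hexp]
  have hDD : c₁₁ ^ 2 * D ^ 2 ≤ c₁₁ ^ 2 * (2 * lam * M) :=
    mul_le_mul_of_nonneg_left hD2M (by positivity)
  linarith only [key, young, hDD]
end

section
/- Let φ be (ρ+η)-weakly convex with optimal solution set X* ≠ ∅ and optimal value φ*. If there are c₁₁, c₁₂ ≥ 0 with ‖v‖² ≤ c₁₁[φ(x) − φ*] + c₁₂ for all x ∈ X and v ∈ ∂φ(x), then ‖v‖² ≤ c₁₁(ρ+η+c₁₁) dist²(x, X*) + 2c₁₂ for all x ∈ X and v ∈ ∂φ(x). -/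
open scoped RealInnerProductSpace

/-- (B_G) implies the dist(x,X*)-type subgradient bound (B_{A-D}). -/
theorem BG_implies_BAD {d : ℕ} (ρ η : ℝ) (hρ : 0 ≤ ρ) (hη : 0 ≤ η)
    (X : Set (E d)) (hXcl : IsClosed X) (hXcv : Convex ℝ X) (hXne : X.Nonempty)
    (φ : E d → ℝ)
    (hw : ConvexOn ℝ X (fun z => φ z + (ρ + η) / 2 * ‖z‖ ^ 2))
    (Xstar : Set (E d)) (hXstar : Xstar = {x ∈ X | ∀ y ∈ X, φ x ≤ φ y})
    (hne : Xstar.Nonempty)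
    (φstar : ℝ) (hφstar : ∀ x ∈ Xstar, φ x = φstar)
    (c₁₁ c₁₂ : ℝ) (hc₁₁ : 0 ≤ c₁₁) (hc₁₂ : 0 ≤ c₁₂)
    (hBG : ∀ x ∈ X, ∀ v : E d,
      (∀ y ∈ X, φ y ≥ φ x + ⟪v, y - x⟫ - (ρ + η) / 2 * ‖x - y‖ ^ 2) →
      ‖v‖ ^ 2 ≤ c₁₁ * (φ x - φstar) + c₁₂) :
    ∀ x ∈ X, ∀ v : E d,
      (∀ y ∈ X, φ y ≥ φ x + ⟪v, y - x⟫ - (ρ + η) / 2 * ‖x - y‖ ^ 2) →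
      ‖v‖ ^ 2 ≤ c₁₁ * (ρ + η + c₁₁) * (Metric.infDist x Xstar) ^ 2 + 2 * c₁₂ := by
  intro x hx v hsub
  set C : ℝ := c₁₁ * (ρ + η + c₁₁) with hCdef
  have hC : 0 ≤ C := mul_nonneg hc₁₁ (by linarith)
  -- pointwise bound for every minimizer
  have key : ∀ z ∈ Xstar, ‖v‖ ^ 2 ≤ C * (dist x z) ^ 2 + 2 * c₁₂ := by
    intro z hz
    have hzX : z ∈ X := by rw [hXstar] at hz; exact hz.1
    have hzval : φ z = φstar := hφstar z hz
    have h1 : φ z ≥ φ x + ⟪v, z - x⟫ - (ρ + η) / 2 * ‖x - z‖ ^ 2 := hsub z hzX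
    have h2 : ‖v‖ ^ 2 ≤ c₁₁ * (φ x - φstar) + c₁₂ := hBG x hx v hsub
    have hinner : -(‖v‖ * ‖z - x‖) ≤ ⟪v, z - x⟫ :=
      neg_le_of_abs_le (abs_real_inner_le_norm v (z - x))
    have hnn : ‖x - z‖ = ‖z - x‖ := norm_sub_rev x z
    have hd : dist x z = ‖z - x‖ := by rw [dist_eq_norm, hnn]
    rw [hd]
    have hvnn : (0:ℝ) ≤ ‖v‖ := norm_nonneg v
    have hznn : (0:ℝ) ≤ ‖z - x‖ := norm_nonneg _
    rw [hnn] at h1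
    have hgap : φ x - φstar ≤ ‖v‖ * ‖z - x‖ + (ρ + η) / 2 * ‖z - x‖ ^ 2 := by
      nlinarith [h1, hinner]
    have hmul := mul_le_mul_of_nonneg_left hgap hc₁₁
    nlinarith [sq_nonneg (c₁₁ * ‖z - x‖ - ‖v‖)]
  -- pass to the infimum
  have hDnn : 0 ≤ Metric.infDist x Xstar := Metric.infDist_nonneg
  set D : ℝ := Metric.infDist x Xstar with hD
  refine le_of_forall_pos_le_add ?_
  intro ε hε
  have hden : 0 < C * (2 * D + 1) + 1 := by nlinarith
  set δ : ℝ := min 1 (ε / (C * (2 * D + 1) + 1)) with hδdef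
  have hδpos : 0 < δ := lt_min one_pos (div_pos hε hden)
  obtain ⟨z, hz, hdz⟩ := (Metric.infDist_lt_iff hne).1 (by linarith : D < D + δ)
  have hkey := key z hz
  have hδ1 : δ ≤ 1 := min_le_left _ _
  have hδ2 : δ * (C * (2 * D + 1) + 1) ≤ ε := by
    have := min_le_right 1 (ε / (C * (2 * D + 1) + 1))
    calc δ * (C * (2 * D + 1) + 1) ≤ (ε / (C * (2 * D + 1) + 1)) * (C * (2 * D + 1) + 1) := by
          apply mul_le_mul_of_nonneg_right this hden.le
      _ = ε := div_mul_cancel₀ ε hden.ne'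
  have hdnn : 0 ≤ dist x z := dist_nonneg
  have hsq : dist x z ^ 2 ≤ (D + δ) ^ 2 := by nlinarith
  have hCsq : C * dist x z ^ 2 ≤ C * (D + δ) ^ 2 := mul_le_mul_of_nonneg_left hsq hC
  have hδδ : C * (δ * δ) ≤ C * (δ * 1) :=
    mul_le_mul_of_nonneg_left (mul_le_mul_of_nonneg_left hδ1 hδpos.le) hC
  nlinarith [hδ2, mul_nonneg hC hδpos.le]
end

section
/- Suppose φ is ρ-weakly convex, satisfies the global KL property with exponent 1/2 (φ(x) − φ* ≤ κ·dist²(0, ∂φ(x) + N_X(x)) for all x ∈ X, κ > 0), and the Moreau envelope satisfies ‖∇φ_λ(x)‖ = (1/λ)‖x − Prox_{λ,φ}(x)‖ with λ·dist(0, ∂φ(Prox_{λ,φ}(x)) + N_X(Prox_{λ,φ}(x))) ≤ ‖x − Prox_{λ,φ}(x)‖. Then φ_λ(x) − φ* ≤ (κ + λ/2)‖∇φ_λ(x)‖² for all x ∈ X. -/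
open scoped RealInnerProductSpace

/-- With `r = ‖x - p x‖` and `δ = dist(0, S (p x))` this is the whole estimate: KL at the
proximal point `p x`, plus the quadratic term of the envelope. -/
lemma add_sq_div_le_of_le_mul_sq {a κ lam δ r : ℝ} (hlam : 0 < lam) (hκ : 0 ≤ κ)
    (hδ : 0 ≤ δ) (ha : a ≤ κ * δ ^ 2) (hδr : lam * δ ≤ r) :
    a + r ^ 2 / (2 * lam) ≤ (κ + lam / 2) * (lam⁻¹ * r) ^ 2 := by
  have hδ_le : δ ≤ lam⁻¹ * r := (le_inv_mul_iff₀ hlam).2 hδr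
  have hsq : κ * δ ^ 2 ≤ κ * (lam⁻¹ * r) ^ 2 := by gcongr
  have hsplit : r ^ 2 / (2 * lam) = lam / 2 * (lam⁻¹ * r) ^ 2 := by
    field_simp
  rw [hsplit]
  linarith

theorem gKL_transfer_to_envelope_general {d : ℕ} (lam κ : ℝ) (hlam : 0 < lam) (hκ : 0 < κ)
    (X : Set (E d)) (φ : E d → ℝ)
    (p : E d → E d) (hpX : ∀ x, p x ∈ X)
    (φl : E d → ℝ)
    (hφl : ∀ x : E d, φl x = φ (p x) + ‖p x - x‖ ^ 2 / (2 * lam))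
    (xstar : E d)
    (S : E d → Set (E d))
    (hKL : ∀ x ∈ X, φ x - φ xstar ≤ κ * (Metric.infDist 0 (S x)) ^ 2)
    (G : E d → E d)
    (hGnorm : ∀ x : E d, ‖G x‖ = lam⁻¹ * ‖x - p x‖)
    (hproxdist : ∀ x : E d, lam * Metric.infDist 0 (S (p x)) ≤ ‖x - p x‖) :
    ∀ x ∈ X, φl x - φ xstar ≤ (κ + lam / 2) * ‖G x‖ ^ 2 := by
  intro x _
  have key := add_sq_div_le_of_le_mul_sq hlam hκ.le Metric.infDist_nonneg
    (hKL (p x) (hpX x)) (hproxdist x)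
  rw [hφl x, hGnorm x, norm_sub_rev]
  linarith

/-- the global KL property of φ with exponent 1/2 implies the global
KL inequality of the Moreau envelope φ_λ. -/
theorem gKL_transfer_to_envelope {d : ℕ} (ρ lam κ : ℝ) (hρ : 0 < ρ) (hlam : 0 < lam)
    (hlamρ : lam < 1 / ρ) (hκ : 0 < κ)
    (X : Set (E d)) (hXcl : IsClosed X) (hXcv : Convex ℝ X) (hXne : X.Nonempty)
    (φ : E d → ℝ)
    (hw : ConvexOn ℝ X (fun z => φ z + ρ / 2 * ‖z‖ ^ 2))
    (p : E d → E d) (hpX : ∀ x, p x ∈ X)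
    (hpmin : ∀ x : E d, ∀ y ∈ X,
      φ (p x) + ‖p x - x‖ ^ 2 / (2 * lam) ≤ φ y + ‖y - x‖ ^ 2 / (2 * lam))
    (φl : E d → ℝ)
    (hφl : ∀ x : E d, φl x = φ (p x) + ‖p x - x‖ ^ 2 / (2 * lam))
    (xstar : E d) (hxstarX : xstar ∈ X) (hxstarmin : ∀ y ∈ X, φ xstar ≤ φ y)
    -- S x = ∂φ(x) + N_X(x)
    (S : E d → Set (E d))
    (hS : ∀ x : E d, S x = {w : E d | ∃ v n : E d,
      (∀ y ∈ X, φ y ≥ φ x + ⟪v, y - x⟫ - ρ / 2 * ‖x - y‖ ^ 2) ∧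
      (∀ x' ∈ X, ⟪n, x' - x⟫ ≤ 0) ∧ w = v + n})
    (hKL : ∀ x ∈ X, φ x - φ xstar ≤ κ * (Metric.infDist 0 (S x)) ^ 2)
    (G : E d → E d)
    (hGnorm : ∀ x : E d, ‖G x‖ = lam⁻¹ * ‖x - p x‖)
    (hproxdist : ∀ x : E d, lam * Metric.infDist 0 (S (p x)) ≤ ‖x - p x‖) :
    ∀ x ∈ X, φl x - φ xstar ≤ (κ + lam / 2) * ‖G x‖ ^ 2 :=
  gKL_transfer_to_envelope_general lam κ hlam hκ X φ p hpX φl hφl xstar S hKL G hGnorm hproxdist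
end

section
/- Let (y_k) be a sequence in ℝ^d, (μ_k) nonnegative reals, and Θ : ℝ^d → ℝ^m be L-Lipschitz on {y_k}. Assume: (i) there is M ≥ 0 with ‖y_k − y_{k+1}‖ ≤ M·μ_k for all k; (ii) Σμ_k = ∞; (iii) there exist Θ̄ ∈ ℝ^m and p > 0 with Σ μ_k‖Θ(y_k) − Θ̄‖^p < ∞. Then lim_{k→∞} ‖Θ(y_k) − Θ̄‖ = 0. -/
/-- convergence of the mapping norm along the iterates. -/
theorem mapping_norm_converges {d m : ℕ} (y : ℕ → E d) (μ : ℕ → ℝ)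
    (hμ : ∀ k, 0 ≤ μ k)
    (Θ : E d → EuclideanSpace ℝ (Fin m)) (L : ℝ) (hL : 0 ≤ L)
    (hLip : ∀ j k : ℕ, ‖Θ (y j) - Θ (y k)‖ ≤ L * ‖y j - y k‖)
    (M : ℝ) (hM : 0 ≤ M)
    (hstep : ∀ k : ℕ, ‖y k - y (k + 1)‖ ≤ M * μ k)
    (hdiv : Filter.Tendsto (fun n => ∑ k ∈ Finset.range n, μ k) Filter.atTop Filter.atTop)
    (Θbar : EuclideanSpace ℝ (Fin m)) (p : ℝ) (hp : 0 < p)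
    (hsum : Summable (fun k => μ k * ‖Θ (y k) - Θbar‖ ^ p)) :
    Filter.Tendsto (fun k => ‖Θ (y k) - Θbar‖) Filter.atTop (nhds 0) := by
  set a : ℕ → ℝ := fun k => ‖Θ (y k) - Θbar‖ with ha_def
  set f : ℕ → ℝ := fun k => μ k * a k ^ p with hf_def
  have ha : ∀ k, 0 ≤ a k := fun k => norm_nonneg _
  set C : ℝ := L * M + 1 with hC_def
  have hC : 0 < C := by positivity
  have hstep' : ∀ k, |a (k + 1) - a k| ≤ C * μ k := by
    intro k
    have h1 : |a (k + 1) - a k| ≤ ‖(Θ (y (k+1)) - Θbar) - (Θ (y k) - Θbar)‖ :=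
      abs_norm_sub_norm_le _ _
    have h2 : (Θ (y (k+1)) - Θbar) - (Θ (y k) - Θbar) = Θ (y (k+1)) - Θ (y k) := by
      abel
    rw [h2] at h1
    have h3 : ‖Θ (y (k+1)) - Θ (y k)‖ ≤ L * ‖y (k+1) - y k‖ := hLip _ _
    have h4 : ‖y (k+1) - y k‖ = ‖y k - y (k+1)‖ := norm_sub_rev _ _
    have h5 : ‖y k - y (k+1)‖ ≤ M * μ k := hstep k
    have h6 : L * ‖y (k+1) - y k‖ ≤ L * (M * μ k) := by
      rw [h4]; exact mul_le_mul_of_nonneg_left h5 hL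
    have : L * (M * μ k) ≤ C * μ k := by
      have := hμ k; nlinarith
    linarith
  -- telescoping bound
  have htel : ∀ k n : ℕ, k ≤ n → a k - a n ≤ C * ∑ i ∈ Finset.Ico k n, μ i := by
    intro k n hkn
    induction n, hkn using Nat.le_induction with
    | base => simp
    | succ n hkn ih =>
      rw [Finset.sum_Ico_succ_top hkn]
      have h1 : a n - a (n + 1) ≤ C * μ n := by
        have := hstep' n
        have := abs_le.1 this
        linarith [this.1]
      linarith [ih]
  -- a positive lower bound on a along a tail forces μ summable, contradicting hdiv
  have hsub : ∀ c : ℝ, 0 < c → ∀ N : ℕ, ∃ n, N ≤ n ∧ a n < c := by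
    intro c hc N
    by_contra h
    push_neg at h
    have hcp : 0 < c ^ p := Real.rpow_pos_of_pos hc p
    have h1 : Summable (fun n => f (n + N)) := (summable_nat_add_iff N).2 hsum
    have h2 : Summable (fun n => μ (n + N)) := by
      apply Summable.of_nonneg_of_le (fun n => hμ _) (fun n => ?_)
        (h1.mul_left (c ^ p)⁻¹)
      have hca : c ^ p ≤ a (n + N) ^ p :=
        Real.rpow_le_rpow hc.le (h (n + N) (Nat.le_add_left _ _)) hp.le
      have hμn := hμ (n + N)
      rw [le_inv_mul_iff₀ hcp]
      simp only [hf_def]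
      nlinarith
    have hsμ : Summable μ := (summable_nat_add_iff N).1 h2
    exact absurd hdiv (not_tendsto_atTop_of_tendsto_nhds hsμ.hasSum.tendsto_sum_nat)
  -- main argument
  by_contra hcon
  rw [Metric.tendsto_atTop] at hcon
  push_neg at hcon
  obtain ⟨ε, hε, hfreq⟩ := hcon
  have hεa : ∀ n, dist (a n) 0 = a n := by
    intro n; rw [Real.dist_eq, sub_zero, abs_of_nonneg (ha n)]
  set δ : ℝ := (ε / 2) ^ p * (ε / (2 * C)) with hδ_def
  have hδ : 0 < δ := by
    have := Real.rpow_pos_of_pos (by linarith : (0:ℝ) < ε / 2) p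
    have : 0 < ε / (2 * C) := by positivity
    positivity
  set S : ℕ → ℝ := fun n => ∑ i ∈ Finset.range n, f i with hS_def
  have hcauchy : CauchySeq S := hsum.hasSum.tendsto_sum_nat.cauchySeq
  rw [Metric.cauchySeq_iff'] at hcauchy
  obtain ⟨N, hN⟩ := hcauchy δ hδ
  obtain ⟨k, hkN, hak⟩ := hfreq N
  rw [hεa] at hak
  have hP : ∃ n, k + 1 ≤ n ∧ a n < ε / 2 := hsub (ε / 2) (by linarith) (k + 1)
  set n := Nat.find hP with hn_def
  obtain ⟨hkn, han⟩ := Nat.find_spec hP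
  have hmin : ∀ i, i < n → ¬(k + 1 ≤ i ∧ a i < ε / 2) := fun i hi => Nat.find_min hP hi
  have hlow : ∀ i, k ≤ i → i < n → ε / 2 ≤ a i := by
    intro i hki hin
    rcases eq_or_lt_of_le hki with rfl | hki'
    · linarith
    · have := hmin i hin
      push_neg at this
      exact this hki'
  have hkn' : k ≤ n := by omega
  -- lower bound on the μ-sum over [k, n)
  have hμsum : ε / (2 * C) ≤ ∑ i ∈ Finset.Ico k n, μ i := by
    have h1 := htel k n hkn'
    have h2 : ε / 2 ≤ a k - a n := by linarith
    rw [div_le_iff₀ (by positivity : (0:ℝ) < 2 * C)]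
    nlinarith
  -- lower bound on the f-sum over [k, n)
  have hfsum : δ ≤ ∑ i ∈ Finset.Ico k n, f i := by
    have h1 : ∀ i ∈ Finset.Ico k n, (ε / 2) ^ p * μ i ≤ f i := by
      intro i hi
      rw [Finset.mem_Ico] at hi
      have hai : (ε / 2) ^ p ≤ a i ^ p :=
        Real.rpow_le_rpow (by linarith) (hlow i hi.1 hi.2) hp.le
      have := hμ i
      simp only [hf_def]
      nlinarith
    calc δ = (ε / 2) ^ p * (ε / (2 * C)) := rfl
      _ ≤ (ε / 2) ^ p * ∑ i ∈ Finset.Ico k n, μ i := by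
          apply mul_le_mul_of_nonneg_left hμsum
          exact (Real.rpow_pos_of_pos (by linarith) p).le
      _ = ∑ i ∈ Finset.Ico k n, (ε / 2) ^ p * μ i := by rw [Finset.mul_sum]
      _ ≤ ∑ i ∈ Finset.Ico k n, f i := Finset.sum_le_sum h1
  -- contradiction with Cauchy property
  have hNn : N ≤ n := le_trans hkN hkn'
  have hdist := hN n hNn
  have hf_nonneg : ∀ i, 0 ≤ f i := by
    intro i
    exact mul_nonneg (hμ i) (Real.rpow_nonneg (ha i) p)
  have hsubset : Finset.Ico k n ⊆ Finset.Ico N n := by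
    apply Finset.Ico_subset_Ico hkN le_rfl
  have hmono : ∑ i ∈ Finset.Ico k n, f i ≤ ∑ i ∈ Finset.Ico N n, f i :=
    Finset.sum_le_sum_of_subset_of_nonneg hsubset (fun i _ _ => hf_nonneg i)
  have hSdiff : S n - S N = ∑ i ∈ Finset.Ico N n, f i := by
    rw [hS_def]
    exact (Finset.sum_Ico_eq_sub f hNn).symm
  rw [Real.dist_eq] at hdist
  have : δ ≤ |S n - S N| := by
    rw [hSdiff]
    calc δ ≤ ∑ i ∈ Finset.Ico N n, f i := le_trans hfsum hmono
      _ ≤ |∑ i ∈ Finset.Ico N n, f i| := le_abs_self _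
  linarith
end

section
/- Let f be ρ-weakly convex, r be η-weakly convex on a closed convex set X ⊆ ℝ^d, let x^k ∈ X, g(x^k) ∈ ∂f(x^k), α_k < 1/(6η), and x^{k+1} := argmin_{x∈X} [⟨g(x^k), x⟩ + r(x) + (1/(2α_k))‖x − x^k‖²]. Then for any x ∈ X, λ < 1/(ρ+2η), and any h(x^k) ∈ ∂r(x^k): ‖x − x^{k+1}‖² ≤ (1 − ((1 − λ(ρ+2η))α_k)/λ)‖x − x^k‖² − 2α_k[φ(x^k) − φ(x) − (1/(2λ))‖x − x^k‖²] + 2α_k²‖g(x^k)+h(x^k)‖², where φ = f + r. -/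
open scoped RealInnerProductSpace

set_option maxHeartbeats 1000000

lemma combo_sq {d : ℕ} (a b : E d) (t : ℝ) :
    ‖(1 - t) • a + t • b‖ ^ 2 =
      (1 - t) * ‖a‖ ^ 2 + t * ‖b‖ ^ 2 - t * (1 - t) * ‖a - b‖ ^ 2 := by
  have h1 := norm_add_sq_real ((1 - t) • a) (t • b)
  have h2 := norm_sub_sq_real a b
  rw [real_inner_smul_left, real_inner_smul_right, norm_smul, norm_smul] at h1
  simp only [Real.norm_eq_abs, mul_pow, sq_abs] at h1
  nlinarith [h1, h2]


/-- basic recursion of the proximal subgradient method. -/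
theorem prox_subgrad_basic_recursion {d : ℕ} (ρ η lam α : ℝ)
    (hρ : 0 ≤ ρ) (hη : 0 ≤ η) (hα : 0 < α) (hα6 : 6 * η * α < 1)
    (hlam : 0 < lam) (hlamρη : lam * (ρ + 2 * η) < 1)
    (X : Set (E d)) (hXcl : IsClosed X) (hXcv : Convex ℝ X)
    (f r : E d → ℝ)
    (hf : ConvexOn ℝ X (fun z => f z + ρ / 2 * ‖z‖ ^ 2))
    (hr : ConvexOn ℝ X (fun z => r z + η / 2 * ‖z‖ ^ 2))
    (xk : E d) (hxk : xk ∈ X)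
    (g : E d) (hg : ∀ y ∈ X, f y ≥ f xk + ⟪g, y - xk⟫ - ρ / 2 * ‖xk - y‖ ^ 2)
    (h : E d) (hh : ∀ y ∈ X, r y ≥ r xk + ⟪h, y - xk⟫ - η / 2 * ‖xk - y‖ ^ 2)
    (xk1 : E d) (hxk1 : xk1 ∈ X)
    (hmin : ∀ x ∈ X, ⟪g, xk1⟫ + r xk1 + ‖xk1 - xk‖ ^ 2 / (2 * α) ≤
      ⟪g, x⟫ + r x + ‖x - xk‖ ^ 2 / (2 * α))
    (x : E d) (hx : x ∈ X) :
    ‖x - xk1‖ ^ 2 ≤ (1 - (1 - lam * (ρ + 2 * η)) * α / lam) * ‖x - xk‖ ^ 2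
      - 2 * α * ((f xk + r xk) - (f x + r x) - ‖x - xk‖ ^ 2 / (2 * lam))
      + 2 * α ^ 2 * ‖g + h‖ ^ 2 := by
  have h2α : (0:ℝ) < 2 * α := by linarith
  have hηα : η * α < 1/6 := by nlinarith
  set A := ‖x - xk1‖ with hA
  set B := ‖x - xk‖ with hB
  set C := ‖xk1 - xk‖ with hC
  -- strong-convexity inequality at the minimizer, for each t ∈ (0,1)
  have key : ∀ t : ℝ, 0 < t → t < 1 →
      (1 - α*η) * ((1-t) * A^2) ≤
        (⟪g, x⟫ + r x) * (2*α) + B^2 - (⟪g, xk1⟫ + r xk1) * (2*α) - C^2 := by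
    intro t ht0 ht1
    have ht0' : (0:ℝ) ≤ 1 - t := by linarith
    set xt : E d := (1-t) • xk1 + t • x with hxt
    have hxtX : xt ∈ X := hXcv hxk1 hx ht0' ht0.le (by ring)
    have hm := hmin xt hxtX
    have hm' : (⟪g, xk1⟫ + r xk1) * (2*α) + C^2 ≤
        (⟪g, xt⟫ + r xt) * (2*α) + ‖xt - xk‖^2 := by
      have hmm := mul_le_mul_of_nonneg_right hm h2α.le
      have e1 : C^2 / (2*α) * (2*α) = C^2 := div_mul_cancel₀ _ (ne_of_gt h2α)
      have e2 : ‖xt - xk‖^2 / (2*α) * (2*α) = ‖xt - xk‖^2 :=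
        div_mul_cancel₀ _ (ne_of_gt h2α)
      nlinarith [hmm]
    have hAx : ‖xk1 - x‖ = A := norm_sub_rev xk1 x
    have hlin : ⟪g, xt⟫ = (1-t) * ⟪g, xk1⟫ + t * ⟪g, x⟫ := by
      rw [hxt, inner_add_right, real_inner_smul_right, real_inner_smul_right]
    have hlin2 : (2*α) * ⟪g, xt⟫ = (2*α) * ((1-t) * ⟪g, xk1⟫ + t * ⟪g, x⟫) := by
      rw [hlin]
    have hrc := hr.2 hxk1 hx ht0' ht0.le (by ring)
    simp only [smul_eq_mul] at hrc
    have hn1 : ‖xt‖^2 = (1-t)*‖xk1‖^2 + t*‖x‖^2 - t*(1-t)*A^2 := by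
      rw [hxt, combo_sq, hAx]
    have hn1' : η/2 * ‖xt‖^2 = η/2 * ((1-t)*‖xk1‖^2 + t*‖x‖^2 - t*(1-t)*A^2) := by
      rw [hn1]
    have hrc' : r xt ≤ (1-t) * r xk1 + t * r x + η/2 * (t*(1-t)*A^2) := by
      have hn1'' : η/2 * ‖xk1‖^2 = η/2 * ‖xk1‖^2 := rfl
      nlinarith [hrc, hn1']
    have hrc2 : (2*α) * r xt ≤ (2*α) * ((1-t) * r xk1 + t * r x + η/2 * (t*(1-t)*A^2)) :=
      mul_le_mul_of_nonneg_left hrc' h2α.le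
    have hxtk : xt - xk = (1-t) • (xk1 - xk) + t • (x - xk) := by
      rw [hxt]; module
    have hdiff : (xk1 - xk) - (x - xk) = xk1 - x := by abel
    have hn2 : ‖xt - xk‖^2 = (1-t)*C^2 + t*B^2 - t*(1-t)*A^2 := by
      rw [hxtk, combo_sq, hdiff, hAx]
    have hcomb : (⟪g, xk1⟫ + r xk1) * (2*α) + C^2 ≤
        (2*α) * ((1-t) * ⟪g, xk1⟫ + t * ⟪g, x⟫)
          + (2*α) * ((1-t) * r xk1 + t * r x + η/2 * (t*(1-t)*A^2))
          + ((1-t)*C^2 + t*B^2 - t*(1-t)*A^2) := by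
      linarith [hm', hlin2, hrc2, hn2]
    have hmain : t * ((1 - α*η) * ((1-t) * A^2)) ≤
        t * ((⟪g, x⟫ + r x) * (2*α) + B^2 - (⟪g, xk1⟫ + r xk1) * (2*α) - C^2) := by
      nlinarith [hcomb]
    exact le_of_mul_le_mul_left hmain ht0
  -- pass to the limit t → 0
  have hkey : (1 - α*η) * A^2 ≤
      (⟪g, x⟫ + r x) * (2*α) + B^2 - (⟪g, xk1⟫ + r xk1) * (2*α) - C^2 := by
    have h1 : (0:ℝ) < 1 - α*η := by nlinarith
    refine le_of_forall_pos_le_add ?_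
    intro ε hε
    have hM0 : 0 ≤ (1 - α*η) * A^2 := mul_nonneg h1.le (sq_nonneg _)
    set t := min (1/2 : ℝ) (ε / ((1 - α*η) * A^2 + 1)) with htdef
    have ht0 : 0 < t := lt_min (by norm_num) (div_pos hε (by linarith))
    have ht1 : t < 1 := lt_of_le_of_lt (min_le_left _ _) (by norm_num)
    have hk := key t ht0 ht1
    have htM : t * ((1 - α*η) * A^2) ≤ ε := by
      have h2 : t ≤ ε / ((1 - α*η) * A^2 + 1) := min_le_right _ _
      have h3 : t * ((1 - α*η) * A^2) ≤ (ε / ((1 - α*η) * A^2 + 1)) * ((1 - α*η) * A^2) :=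
        mul_le_mul_of_nonneg_right h2 hM0
      have h4 : (ε / ((1 - α*η) * A^2 + 1)) * ((1 - α*η) * A^2) ≤ ε := by
        rw [div_mul_eq_mul_div, div_le_iff₀ (by linarith)]
        nlinarith
      linarith
    nlinarith [hk, htM]
  -- subgradient inequalities and Cauchy–Schwarz
  have hF := hg x hx
  rw [norm_sub_rev] at hF
  have hCrev : ‖xk - xk1‖ = C := norm_sub_rev xk xk1
  have hR := hh xk1 hxk1
  rw [hCrev] at hR
  have hI1 : ⟪g, x⟫ - ⟪g, xk1⟫ = ⟪g, x - xk⟫ + ⟪g, xk - xk1⟫ := by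
    rw [← inner_add_right]
    have e : (x - xk) + (xk - xk1) = x - xk1 := by abel
    rw [e, inner_sub_right]
  have hI2 : ⟪h, xk1 - xk⟫ = -⟪h, xk - xk1⟫ := by
    rw [← inner_neg_right]; congr 1; abel
  have hCS : ⟪g, xk - xk1⟫ + ⟪h, xk - xk1⟫ ≤ ‖g + h‖ * C := by
    rw [← hCrev]
    calc ⟪g, xk - xk1⟫ + ⟪h, xk - xk1⟫ = ⟪g + h, xk - xk1⟫ := (inner_add_left _ _ _).symm
    _ ≤ ‖g + h‖ * ‖xk - xk1‖ := real_inner_le_norm _ _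
  have hT : A ≤ B + C := by
    calc A = ‖(x - xk) + (xk - xk1)‖ := by rw [hA]; congr 1; abel
    _ ≤ ‖x - xk‖ + ‖xk - xk1‖ := norm_add_le _ _
    _ = B + C := by rw [hCrev]
  have hA2 : A^2 ≤ 2*B^2 + 2*C^2 := by
    nlinarith [hT, sq_nonneg (B - C), norm_nonneg (x - xk1), norm_nonneg (x - xk),
      norm_nonneg (xk1 - xk)]
  -- simplify the RHS of the goal (the λ-terms cancel)
  have hRHS : (1 - (1 - lam * (ρ + 2 * η)) * α / lam) * B ^ 2
      - 2 * α * ((f xk + r xk) - (f x + r x) - B ^ 2 / (2 * lam))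
      + 2 * α ^ 2 * ‖g + h‖ ^ 2
      = (1 + α*(ρ + 2*η)) * B^2 - 2*α*((f xk + r xk) - (f x + r x))
        + 2*α^2*‖g + h‖^2 := by
    field_simp
    ring
  rw [hRHS]
  -- premultiplied facts
  have m0 : 2*α*(⟪g, x⟫ - ⟪g, xk1⟫) = 2*α*(⟪g, x - xk⟫ + ⟪g, xk - xk1⟫) := by rw [hI1]
  have m1 : 2*α*(f xk + ⟪g, x - xk⟫ - ρ/2*B^2) ≤ 2*α*(f x) :=
    mul_le_mul_of_nonneg_left hF h2α.le
  have m2 : 2*α*(r xk + ⟪h, xk1 - xk⟫ - η/2*C^2) ≤ 2*α*(r xk1) :=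
    mul_le_mul_of_nonneg_left hR h2α.le
  have m3 : 2*α*(⟪g, xk - xk1⟫ + ⟪h, xk - xk1⟫) ≤ 2*α*(‖g + h‖*C) :=
    mul_le_mul_of_nonneg_left hCS h2α.le
  have m4 : (α*η)*A^2 ≤ (α*η)*(2*B^2 + 2*C^2) :=
    mul_le_mul_of_nonneg_left hA2 (by positivity)
  have m5 : 2*α*(‖g + h‖*C) ≤ 2*α^2*‖g + h‖^2 + C^2/2 := by
    nlinarith [sq_nonneg (2*α*‖g + h‖ - C)]
  have m6 : 2*α*⟪h, xk1 - xk⟫ = -(2*α*⟪h, xk - xk1⟫) := by rw [hI2]; ring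
  have m7 : 0 ≤ (1 - 6*η*α)*C^2 :=
    mul_nonneg (by linarith) (sq_nonneg C)
  nlinarith [hkey, m0, m1, m2, m3, m4, m5, m6, m7]
end

section
/- Let φ be ρ-weakly convex on closed convex X with λ < 1/ρ, and assume: (a) the global quadratic growth dist²(x, X*) ≤ κ_QG[φ(x) − φ*] for all x ∈ X; and (b) φ({Prox}_{λ,φ}(x)) − φ* + (1/(2λ))‖x − Prox_{λ,φ}(x)‖² = φ_λ(x) − φ*. Then dist²(x, X̄) ≤ 2·max{κ_QG, 2λ}·[φ_λ(x) − φ*] for all x ∈ X, where X̄ ⊇ X* is the set of critical points. -/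
open scoped RealInnerProductSpace

namespace Metric

variable {α : Type*} [PseudoMetricSpace α]

theorem infDist_le_dist_add_infDist_of_subset {s t : Set α} (hst : s ⊆ t) (hs : s.Nonempty)
    (x y : α) : infDist x t ≤ dist x y + infDist y s :=
  calc infDist x t ≤ infDist y t + dist x y := infDist_le_infDist_add_dist
    _ ≤ infDist y s + dist x y := by gcongr; exact infDist_le_infDist_of_subset hst hs
    _ = dist x y + infDist y s := add_comm _ _

theorem infDist_sq_le_of_subset {s t : Set α} (hst : s ⊆ t) (hs : s.Nonempty) (x y : α) :
    infDist x t ^ 2 ≤ 2 * dist x y ^ 2 + 2 * infDist y s ^ 2 := by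
  have htri := infDist_le_dist_add_infDist_of_subset hst hs x y
  nlinarith [infDist_nonneg (x := x) (s := t), sq_nonneg (dist x y - infDist y s)]

end Metric

theorem mul_add_mul_le_max_mul_add {a b u v : ℝ} (hu : 0 ≤ u) (hv : 0 ≤ v) :
    a * u + b * v ≤ max a b * (u + v) := by
  rw [mul_add]
  gcongr
  · exact le_max_left a b
  · exact le_max_right a b

theorem QG_transfers_to_envelope_general {d : ℕ} (lam κ : ℝ)
    (hlam : 0 < lam) (hκ : 0 < κ)
    (X : Set (E d))
    (φ : E d → ℝ)
    (Xstar Xbar : Set (E d)) (hsub : Xstar ⊆ Xbar) (hne : Xstar.Nonempty)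
    (φstar : ℝ)
    (hQG : ∀ x ∈ X, (Metric.infDist x Xstar) ^ 2 ≤ κ * (φ x - φstar))
    (p : E d → E d) (hpX : ∀ x, p x ∈ X)
    (φl : E d → ℝ)
    (hb : ∀ x : E d, φ (p x) - φstar + ‖x - p x‖ ^ 2 / (2 * lam) = φl x - φstar) :
    ∀ x ∈ X, (Metric.infDist x Xbar) ^ 2 ≤ 2 * max κ (2 * lam) * (φl x - φstar) := by
  intro x _
  have hQGp := hQG (p x) (hpX x)
  have hgap : 0 ≤ φ (p x) - φstar :=
    nonneg_of_mul_nonneg_right ((sq_nonneg _).trans hQGp) hκ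
  calc Metric.infDist x Xbar ^ 2
      ≤ 2 * dist x (p x) ^ 2 + 2 * Metric.infDist (p x) Xstar ^ 2 :=
        Metric.infDist_sq_le_of_subset hsub hne x (p x)
    _ ≤ 2 * (κ * (φ (p x) - φstar) + 2 * lam * (‖x - p x‖ ^ 2 / (2 * lam))) := by
        rw [dist_eq_norm, mul_div_cancel₀ _ (by positivity)]
        linarith
    _ ≤ 2 * (max κ (2 * lam) * (φ (p x) - φstar + ‖x - p x‖ ^ 2 / (2 * lam))) := by
        gcongr
        exact mul_add_mul_le_max_mul_add hgap (by positivity)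
    _ = 2 * max κ (2 * lam) * (φl x - φstar) := by rw [hb x, mul_assoc]

/-- quadratic growth of φ transfers to the Moreau envelope with
respect to the critical set X̄. -/
theorem QG_transfers_to_envelope {d : ℕ} (ρ lam κ : ℝ)
    (hρ : 0 ≤ ρ) (hlam : 0 < lam) (hlamρ : lam * ρ < 1) (hκ : 0 < κ)
    (X : Set (E d)) (hXcl : IsClosed X) (hXcv : Convex ℝ X)
    (φ : E d → ℝ)
    (hw : ConvexOn ℝ X (fun z => φ z + ρ / 2 * ‖z‖ ^ 2))
    (Xstar Xbar : Set (E d)) (hsub : Xstar ⊆ Xbar) (hne : Xstar.Nonempty)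
    (hXstar : Xstar = {x ∈ X | ∀ y ∈ X, φ x ≤ φ y})
    (φstar : ℝ) (hφstar : ∀ x ∈ Xstar, φ x = φstar)
    (hQG : ∀ x ∈ X, (Metric.infDist x Xstar) ^ 2 ≤ κ * (φ x - φstar))
    (p : E d → E d) (hpX : ∀ x, p x ∈ X)
    (hpmin : ∀ x : E d, ∀ y ∈ X,
      φ (p x) + ‖p x - x‖ ^ 2 / (2 * lam) ≤ φ y + ‖y - x‖ ^ 2 / (2 * lam))
    (φl : E d → ℝ)
    (hb : ∀ x : E d, φ (p x) - φstar + ‖x - p x‖ ^ 2 / (2 * lam) = φl x - φstar) :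
    ∀ x ∈ X, (Metric.infDist x Xbar) ^ 2 ≤ 2 * max κ (2 * lam) * (φl x - φstar) :=
  QG_transfers_to_envelope_general lam κ hlam hκ X φ Xstar Xbar hsub hne φstar hQG p hpX φl hb
end
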